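/- Let A be a primitive axial algebra of Jordan type η over a field F with char F ≠ 2, generated by a set 𝒜 of η-axes such that the graph Δ_𝒜 is connected. Let a, b be distinct η-axes in A with τ_a = τ_b. If d is any η-axis in A with τ_d = τ_a, then d ∈ {a, b}. -/

import Mathlib

universe u v

section Prelim

variable (F : Type u) {A : Type v} [Field F] [NonUnitalNonAssocCommRing A]
  [Module F A] [SMulCommClass F A A] [IsScalarTower F A A]

/-- The λ-eigenspace of the adjoint map `ad_a : x ↦ a * x`. -/
def eigSp (a : A) (l : F) : Submodule F A where
  carrier := {x | a * x = l • x}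
  add_mem' := by
    intro x y hx hy
    simp only [Set.mem_setOf_eq] at *
    rw [mul_add, hx, hy, smul_add]
  zero_mem' := by simp
  smul_mem' := by
    intro c x hx
    simp only [Set.mem_setOf_eq] at *
    rw [mul_smul_comm, hx, smul_smul, smul_smul, mul_comm]

/-- `a` is a (primitive) `η`-axis. -/
structure IsAxis (η : F) (a : A) : Prop where
  ne_zero : a ≠ 0
  idem : a * a = a
  decomp : eigSp F a 1 ⊔ eigSp F a 0 ⊔ eigSp F a η = ⊤
  prim : eigSp F a 1 = Submodule.span F {a}
  f11 : ∀ x ∈ eigSp F a 1, ∀ y ∈ eigSp F a 1, x * y ∈ eigSp F a 1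
  f00 : ∀ x ∈ eigSp F a 0, ∀ y ∈ eigSp F a 0, x * y ∈ eigSp F a 0
  f10 : ∀ x ∈ eigSp F a 1, ∀ y ∈ eigSp F a 0, x * y = 0
  fpe : ∀ x ∈ eigSp F a 1 ⊔ eigSp F a 0, ∀ y ∈ eigSp F a η, x * y ∈ eigSp F a η
  fee : ∀ x ∈ eigSp F a η, ∀ y ∈ eigSp F a η, x * y ∈ eigSp F a 1 ⊔ eigSp F a 0

/-- `τ` is the Miyamoto involution of the `η`-axis `a`. -/
structure IsMiyamoto (η : F) (a : A) (τ : A → A) : Prop where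
  fixes : ∀ x ∈ eigSp F a 1 ⊔ eigSp F a 0, τ x = x
  negates : ∀ x ∈ eigSp F a η, τ x = -x
  map_add : ∀ x y : A, τ (x + y) = τ x + τ y
  map_smul : ∀ (c : F) (x : A), τ (c • x) = c • τ x
  map_mul : ∀ x y : A, τ (x * y) = τ x * τ y
  bijective : Function.Bijective τ

/-- `c = φ_a(u)`, the projection of `u` to `F·a` w.r.t. the axis `a`. -/
def IsProjCoeff (η : F) (a u : A) (c : F) : Prop :=
  ∃ u0 ∈ eigSp F a 0, ∃ ue ∈ eigSp F a η, u = c • a + u0 + ue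

/-- `e` is an identity element of the subalgebra `N`. -/
def IsIdentOf (N : NonUnitalSubalgebra F A) (e : A) : Prop :=
  e ∈ N ∧ ∀ z ∈ N, e * z = z

/-- `ψ` is an `F`-algebra automorphism of `A`. -/
structure IsAlgAut (ψ : A → A) : Prop where
  map_add : ∀ x y : A, ψ (x + y) = ψ x + ψ y
  map_smul : ∀ (c : F) (x : A), ψ (c • x) = c • ψ x
  map_mul : ∀ x y : A, ψ (x * y) = ψ x * ψ y
  bijective : Function.Bijective ψ

/-- The graph `Δ_𝒜`: distinct axes are adjacent iff their product is nonzero. -/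
def axesGraph (𝒜 : Set A) : SimpleGraph 𝒜 where
  Adj x y := x ≠ y ∧ (x : A) * (y : A) ≠ 0
  symm := by
    constructor
    rintro x y ⟨hxy, hm⟩
    exact ⟨hxy.symm, by rwa [mul_comm]⟩
  loopless := by constructor; rintro x ⟨h, -⟩; exact h rfl

/-- Multiplication of the Jordan algebra of Clifford type `J(V,B) = F·e ⊕ V`. -/
def cliffMul {V : Type*} [AddCommGroup V] [Module F V]
    (B : V →ₗ[F] V →ₗ[F] F) (x y : F × V) : F × V :=
  (x.1 * y.1 + B x.2 y.2, x.1 • y.2 + y.1 • x.2)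

end Prelim

/-- An isomorphism of `A` with a Jordan algebra of Clifford type `J(V,B)`. -/
structure CliffordTypeIso (F : Type u) (A : Type v) [Field F]
    [NonUnitalNonAssocCommRing A] [Module F A] [SMulCommClass F A A]
    [IsScalarTower F A A] where
  V : Type v
  [instAdd : AddCommGroup V]
  [instMod : Module F V]
  B : V →ₗ[F] V →ₗ[F] F
  symm : ∀ v w : V, B v w = B w v
  iso : A ≃ₗ[F] F × V
  mul_compat : ∀ x y : A, iso (x * y) = cliffMul F B (iso x) (iso y)

/-!
If `τ_a = τ_b = τ_d` with `d ∉ {a, b}`, the three axes are pairwise orthogonal: an axis fixed by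
`τ_a` lies in `A_1(a) ⊕ A_0(a)`, and primitivity forces it to be `a` or to annihilate `a`.
Split an arbitrary axis as `c = p + x` with `p` fixed and `x` negated by `τ`; then `x` lies in the
`η`-eigenspace of each of `a, b, d`. Multiplying the identities `c² = c` and
`c(cu) - η cu ∈ F c` by the axes `u ∈ {a, b, d}` gives polynomial relations between the
coefficients `φ_u(c)`, and in every solution the fusion law of `c` forces `x = 0`. Hence `τ` fixes
every generator, so every generator is `a` or orthogonal to `a`; connectivity of `Δ_𝒜` then gives
`A = F a`, which cannot contain the second axis `b`.
-/

section

variable {F : Type u} {M : Type v} [Field F] [AddCommGroup M] [Module F M]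

lemma eq_zero_of_neg_eq_self (hchar : (2 : F) ≠ 0) {w : M} (h : -w = w) : w = 0 := by
  have hww : (2 : F) • w = 0 := by
    rw [two_smul]
    nth_rewrite 1 [← h]
    exact neg_add_cancel w
  exact (smul_eq_zero.mp hww).resolve_left hchar

lemma eq_zero_and_eq_zero_of_add_eq_zero (hchar : (2 : F) ≠ 0) {G : Type*} [FunLike G M M]
    [AddMonoidHomClass G M M] (σ : G) {w m : M} (hw : σ w = w) (hm : σ m = -m)
    (h : w + m = 0) : w = 0 ∧ m = 0 := by
  have hmw : m = -w := eq_neg_of_add_eq_zero_right h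
  have hw₀ : w = 0 :=
    eq_zero_of_neg_eq_self hchar (by rw [← hw, ← map_neg, ← hmw, hm, hmw, neg_neg, hw])
  exact ⟨hw₀, by rw [hmw, hw₀, neg_zero]⟩

end

lemma mul_self_add_mul_self_eq_and_mul_eq_of_idem {F : Type u} {A : Type v} [Field F]
    [NonUnitalNonAssocCommRing A] [Module F A] {σ : A →ₙₐ[F] A} {p x : A} (hchar : (2 : F) ≠ 0)
    (hc : (p + x) * (p + x) = p + x) (hp : σ p = p) (hx : σ x = -x) :
    p * p + x * x = p ∧ p * x = (2 : F)⁻¹ • x := by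
  rw [add_mul, mul_add, mul_add, mul_comm x p] at hc
  have hsplit : (p * p + x * x - p) + ((2 : F) • (p * x) - x) = 0 := by
    linear_combination (norm := module) hc
  obtain ⟨heven, hodd⟩ := eq_zero_and_eq_zero_of_add_eq_zero hchar σ
    (by simp [hp, hx]) (by simp [hp, hx, neg_add_eq_sub]) hsplit
  exact ⟨sub_eq_zero.mp heven, (eq_inv_smul_iff₀ hchar).mpr (sub_eq_zero.mp hodd)⟩

section

variable {F : Type u} {A : Type v} [Field F] [NonUnitalNonAssocCommRing A]
  [Module F A] [SMulCommClass F A A] {η : F}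

lemma mem_eigSp {a x : A} {l : F} : x ∈ eigSp F a l ↔ a * x = l • x := Iff.rfl

def IsMiyamoto.toNonUnitalAlgHom {a : A} {τ : A → A} (hτ : IsMiyamoto F η a τ) :
    A →ₙₐ[F] A where
  toFun := τ
  map_smul' := hτ.map_smul
  map_zero' := by simpa using hτ.map_smul 0 0
  map_add' := hτ.map_add
  map_mul' := hτ.map_mul

namespace IsAxis

variable {a b c p : A}

lemma self_mem_eigSp_one (ha : IsAxis F η a) : a ∈ eigSp F a 1 := by
  rw [mem_eigSp, ha.idem, one_smul]

lemma exists_eq_add (ha : IsAxis F η a) (u : A) :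
    ∃ p ∈ eigSp F a 1 ⊔ eigSp F a 0, ∃ x ∈ eigSp F a η, u = p + x := by
  obtain ⟨p, hp, x, hx, hpx⟩ := Submodule.mem_sup.mp (ha.decomp ▸ Submodule.mem_top : u ∈ _)
  exact ⟨p, hp, x, hx, hpx.symm⟩

lemma exists_eq_smul_add_of_mem_sup (ha : IsAxis F η a) (hp : p ∈ eigSp F a 1 ⊔ eigSp F a 0) :
    ∃ κ : F, ∃ p₀ ∈ eigSp F a 0, p = κ • a + p₀ := by
  obtain ⟨p₁, hp₁, p₀, hp₀, rfl⟩ := Submodule.mem_sup.mp hp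
  rw [ha.prim, Submodule.mem_span_singleton] at hp₁
  obtain ⟨κ, rfl⟩ := hp₁
  exact ⟨κ, p₀, hp₀, rfl⟩

lemma exists_mul_eq_smul_of_mem_sup (ha : IsAxis F η a)
    (hp : p ∈ eigSp F a 1 ⊔ eigSp F a 0) : ∃ κ : F, a * p = κ • a := by
  obtain ⟨κ, p₀, hp₀, rfl⟩ := ha.exists_eq_smul_add_of_mem_sup hp
  refine ⟨κ, ?_⟩
  rw [mul_add, mul_smul_comm, ha.idem, mem_eigSp.mp hp₀, zero_smul, add_zero]

lemma mul_mul_self_of_mem_sup [IsScalarTower F A A] (ha : IsAxis F η a)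
    (hp : p ∈ eigSp F a 1 ⊔ eigSp F a 0) {κ : F} (hκ : a * p = κ • a) :
    a * (p * p) = (κ * κ) • a := by
  obtain ⟨κ', p₀, hp₀, rfl⟩ := ha.exists_eq_smul_add_of_mem_sup hp
  have ha₀ : a * p₀ = 0 := by rw [mem_eigSp.mp hp₀, zero_smul]
  have hκ' : κ' = κ := by
    refine smul_left_injective F ha.ne_zero ?_
    simp only [← hκ, mul_add, mul_smul_comm, ha.idem, ha₀, add_zero]
  have hsq : (κ' • a + p₀) * (κ' • a + p₀) = (κ' * κ') • a + p₀ * p₀ := by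
    simp only [add_mul, mul_add, smul_mul_assoc, mul_smul_comm, smul_smul, ha.idem, ha₀,
      mul_comm p₀ a, smul_zero, add_zero, zero_add]
  rw [hsq, mul_add, mul_smul_comm, ha.idem, mem_eigSp.mp (ha.f00 _ hp₀ _ hp₀), zero_smul,
    add_zero, hκ']

lemma eq_of_mem_eigSp_one [IsScalarTower F A A] (ha : IsAxis F η a) (hb₀ : b ≠ 0)
    (hb : b * b = b) (hba : b ∈ eigSp F a 1) : b = a := by
  rw [ha.prim, Submodule.mem_span_singleton] at hba
  obtain ⟨l, rfl⟩ := hba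
  have hl : IsIdempotentElem l := by
    refine smul_left_injective F ha.ne_zero ?_
    simpa [smul_mul_assoc, mul_smul_comm, smul_smul, ha.idem] using hb
  rcases IsIdempotentElem.iff_eq_zero_or_one.mp hl with rfl | rfl
  · exact absurd (zero_smul F a) hb₀
  · exact one_smul F a

lemma eq_or_mul_eq_zero_of_mem_sup [IsScalarTower F A A] (ha : IsAxis F η a)
    (hc : IsAxis F η c) (hca : c ∈ eigSp F a 1 ⊔ eigSp F a 0) : c = a ∨ a * c = 0 := by
  obtain ⟨κ, hκ⟩ := ha.exists_mul_eq_smul_of_mem_sup hca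
  have hκκ : IsIdempotentElem κ := by
    refine smul_left_injective F ha.ne_zero ?_
    simp only [← ha.mul_mul_self_of_mem_sup hca hκ, hc.idem, hκ]
  rcases IsIdempotentElem.iff_eq_zero_or_one.mp hκκ with rfl | rfl
  · exact Or.inr (by rw [hκ, zero_smul])
  · refine Or.inl (hc.eq_of_mem_eigSp_one ha.ne_zero ha.idem ?_).symm
    rw [mem_eigSp, mul_comm, hκ]

end IsAxis

namespace IsMiyamoto

variable {a u : A} {σ : A →ₙₐ[F] A}

lemma map_self (ha : IsAxis F η a) (hσ : IsMiyamoto F η a σ) : σ a = a :=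
  hσ.fixes a (Submodule.mem_sup_left ha.self_mem_eigSp_one)

lemma mem_sup_of_map_eq_self (hchar : (2 : F) ≠ 0) (ha : IsAxis F η a)
    (hσ : IsMiyamoto F η a σ) (hu : σ u = u) : u ∈ eigSp F a 1 ⊔ eigSp F a 0 := by
  obtain ⟨p, hp, x, hx, rfl⟩ := ha.exists_eq_add u
  rw [hσ.map_add, hσ.fixes p hp, hσ.negates x hx] at hu
  rw [eq_zero_of_neg_eq_self hchar (add_left_cancel hu), add_zero]
  exact hp

lemma mem_eigSp_of_map_eq_neg (hchar : (2 : F) ≠ 0) (ha : IsAxis F η a)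
    (hσ : IsMiyamoto F η a σ) (hu : σ u = -u) : u ∈ eigSp F a η := by
  obtain ⟨p, hp, x, hx, rfl⟩ := ha.exists_eq_add u
  rw [hσ.map_add, hσ.fixes p hp, hσ.negates x hx, neg_add] at hu
  rw [eq_zero_of_neg_eq_self hchar (add_right_cancel hu).symm, zero_add]
  exact hx

end IsMiyamoto

namespace IsAxis

variable {a b c d u v : A}

lemma eq_or_mul_eq_zero_of_map_eq_self [IsScalarTower F A A] (hchar : (2 : F) ≠ 0)
    {σ : A →ₙₐ[F] A} (ha : IsAxis F η a) (hσa : IsMiyamoto F η a σ) (hc : IsAxis F η c)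
    (hσc : σ c = c) : c = a ∨ a * c = 0 :=
  ha.eq_or_mul_eq_zero_of_mem_sup hc (hσa.mem_sup_of_map_eq_self hchar ha hσc)

lemma mul_mul_eq_mul_of_mem_sup [IsScalarTower F A A] (hc : IsAxis F η c)
    (hu : u ∈ eigSp F c 1 ⊔ eigSp F c 0) : c * (c * u) = c * u := by
  obtain ⟨κ, hκ⟩ := hc.exists_mul_eq_smul_of_mem_sup hu
  rw [hκ, mul_smul_comm, hc.idem]

lemma exists_mul_mul_sub_smul_mul_eq_smul [IsScalarTower F A A] (hc : IsAxis F η c) (u : A) :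
    ∃ γ : F, c * (c * u) - η • (c * u) = γ • c := by
  obtain ⟨q, hq, y, hy, rfl⟩ := hc.exists_eq_add u
  obtain ⟨γ, hγ⟩ := hc.exists_mul_eq_smul_of_mem_sup hq
  have hcy : c * y = η • y := hy
  refine ⟨(1 - η) * γ, ?_⟩
  rw [mul_add, hγ, hcy, mul_add, mul_smul_comm, mul_smul_comm, hc.idem, hcy]
  module

lemma mul_eq_zero_of_mul_eq_mul (hchar : (2 : F) ≠ 0) (hc : IsAxis F η c) (hu : u * u = u)
    (hv : v * v = v) (huv : u * v = 0) (h : c * u = c * v) : c * u = 0 := by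
  have h₀ : u - v ∈ eigSp F c 0 := by rw [mem_eigSp, mul_sub, h, sub_self, zero_smul]
  have hsq : (u - v) * (u - v) = u + v := by
    rw [sub_mul, mul_sub, mul_sub, hu, hv, huv, mul_comm v u, huv]
    abel
  have hsum : c * (u + v) = 0 := by
    rw [← hsq, mem_eigSp.mp (hc.f00 _ h₀ _ h₀), zero_smul]
  rw [mul_add, ← h] at hsum
  exact eq_zero_of_neg_eq_self hchar (neg_eq_of_add_eq_zero_left hsum)

lemma mul_mul_eq_mul_of_orthogonal [IsScalarTower F A A] (hc : IsAxis F η c) (ha : a * a = a)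
    (hab : a * b = 0) (had : a * d = 0) (hbd : b * d = 0) (hb : a - b ∈ eigSp F c η)
    (hd : a - d ∈ eigSp F c η) : c * (c * a) = c * a := by
  have hprod : (a - b) * (a - d) = a := by
    rw [sub_mul, mul_sub, mul_sub, ha, had, mul_comm b a, hab, hbd]
    abel
  exact hc.mul_mul_eq_mul_of_mem_sup (hprod ▸ hc.fee _ hb _ hd)

end IsAxis

variable {σ : A →ₙₐ[F] A} {a b c d p x : A}

lemma eta_smul_mul_self_eq [IsScalarTower F A A] (hchar : (2 : F) ≠ 0)
    (hc : IsAxis F η (p + x)) (hp : σ p = p) (hx : σ x = -x) (hx₀ : x ≠ 0) {u : A}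
    (hu : σ u = u) {κ : F} (hup : u * p = κ • u) (hux : u * x = η • x) :
    η • (x * x) = (η * κ - κ * κ) • u + (κ * η + η * 2⁻¹ - η * η) • p := by
  obtain ⟨-, hpx⟩ := mul_self_add_mul_self_eq_and_mul_eq_of_idem hchar hc.idem hp hx
  obtain ⟨γ, hγ⟩ := hc.exists_mul_mul_sub_smul_mul_eq_smul u
  have hcu : (p + x) * u = κ • u + η • x := by rw [add_mul, mul_comm p, mul_comm x, hup, hux]
  rw [hcu, mul_add, mul_smul_comm, mul_smul_comm, hcu, add_mul, hpx] at hγ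
  have hsplit : ((κ * κ - η * κ) • u + η • (x * x) - γ • p)
      + (κ * η + η * 2⁻¹ - η * η - γ) • x = 0 := by
    linear_combination (norm := module) hγ
  obtain ⟨heven, hodd⟩ := eq_zero_and_eq_zero_of_add_eq_zero hchar σ
    (by simp [hu, hp, hx]) (by simp [hx]) hsplit
  obtain rfl : γ = κ * η + η * 2⁻¹ - η * η :=
    (sub_eq_zero.mp ((smul_eq_zero.mp hodd).resolve_right hx₀)).symm
  linear_combination (norm := module) heven

/-- `κ` is the coefficient `φ_u(c)` of `u` in `c = p + x`. -/
lemma IsAxis.exists_coeff [IsScalarTower F A A] (hchar : (2 : F) ≠ 0)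
    (hc : IsAxis F η (p + x)) (hp : σ p = p) (hx : σ x = -x) (hx₀ : x ≠ 0) {u : A}
    (hu : IsAxis F η u) (hσu : IsMiyamoto F η u σ) :
    ∃ κ : F, u * p = κ • u ∧ (p + x) * u = κ • u + η • x ∧
      u * (x * x) = (κ - κ * κ) • u ∧
      η • (x * x) = (η * κ - κ * κ) • u + (κ * η + η * 2⁻¹ - η * η) • p := by
  have hpu := hσu.mem_sup_of_map_eq_self hchar hu hp
  obtain ⟨κ, hup⟩ := hu.exists_mul_eq_smul_of_mem_sup hpu
  have hux : u * x = η • x := hσu.mem_eigSp_of_map_eq_neg hchar hu hx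
  obtain ⟨hsq, -⟩ := mul_self_add_mul_self_eq_and_mul_eq_of_idem hchar hc.idem hp hx
  refine ⟨κ, hup, by rw [add_mul, mul_comm p, mul_comm x, hup, hux], ?_,
    eta_smul_mul_self_eq hchar hc hp hx hx₀ (hσu.map_self hu) hup hux⟩
  rw [eq_sub_of_add_eq' hsq, mul_sub, hup, hu.mul_mul_self_of_mem_sup hpu hup, sub_smul]

variable {u v : A} {κ κ' : F}

lemma self_coeff_cases [IsScalarTower F A A] (hchar : (2 : F) ≠ 0) (hu : IsAxis F η u)
    (hup : u * p = κ • u) (hux : u * (x * x) = (κ - κ * κ) • u)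
    (hI : η • (x * x) = (η * κ - κ * κ) • u + (κ * η + η * 2⁻¹ - η * η) • p) :
    κ = 0 ∨ 2 * η = 1 ∨ 2 * κ = η := by
  have h := congrArg (u * ·) hI
  simp only [mul_add, mul_smul_comm, hux, hu.idem, hup, smul_smul, ← add_smul] at h
  have h' := smul_left_injective F hu.ne_zero h
  have : κ * ((2 * η - 1) * (2 * κ - η)) = 0 := by
    linear_combination (-2) * h' + (-(η * κ)) * mul_inv_cancel₀ hchar
  rcases mul_eq_zero.mp this with h | h
  · exact Or.inl h
  rcases mul_eq_zero.mp h with h | h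
  · exact Or.inr (Or.inl (by linear_combination h))
  · exact Or.inr (Or.inr (by linear_combination h))

lemma cross_coeff_cases [IsScalarTower F A A] (hchar : (2 : F) ≠ 0) (hη₀ : η ≠ 0)
    (hv : IsAxis F η v) (hvu : v * u = 0) (hvp : v * p = κ' • v)
    (hvx : v * (x * x) = (κ' - κ' * κ') • v)
    (hI : η • (x * x) = (η * κ - κ * κ) • u + (κ * η + η * 2⁻¹ - η * η) • p) :
    κ' = 0 ∨ 2 * (κ + κ') = 2 * η + 1 := by
  have h := congrArg (v * ·) hI
  simp only [mul_add, mul_smul_comm, hvx, hvu, hvp, smul_zero, zero_add, smul_smul] at h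
  have h' := smul_left_injective F hv.ne_zero h
  have : η * (κ' * (2 * (κ + κ') - (2 * η + 1))) = 0 := by
    linear_combination (-2) * h' + (-(η * κ')) * mul_inv_cancel₀ hchar
  rcases mul_eq_zero.mp this with h | h
  · exact absurd h hη₀
  rcases mul_eq_zero.mp h with h | h
  · exact Or.inl h
  · exact Or.inr (by linear_combination h)

lemma coeff_cases (hchar : (2 : F) ≠ 0) {κa κb κd : F}
    (ha : κa = 0 ∨ 2 * η = 1 ∨ 2 * κa = η)
    (hab : κb = 0 ∨ 2 * (κa + κb) = 2 * η + 1) (hba : κa = 0 ∨ 2 * (κb + κa) = 2 * η + 1)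
    (had : κd = 0 ∨ 2 * (κa + κd) = 2 * η + 1) (hda : κa = 0 ∨ 2 * (κd + κa) = 2 * η + 1)
    (hbd : κd = 0 ∨ 2 * (κb + κd) = 2 * η + 1) (hdb : κb = 0 ∨ 2 * (κd + κb) = 2 * η + 1) :
    (κa = 0 ∧ κb = 0) ∨ (κa = 0 ∧ κd = 0) ∨ (κb = 0 ∧ κd = 0) ∨
      (κa = η ∧ κb = η ∧ κd = η) := by
  grind

lemma eq_zero_of_mul_eq_smul_of_orthogonal (hchar : (2 : F) ≠ 0) (hη₀ : η ≠ 0)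
    (hc : IsAxis F η (p + x)) (ha : a * a = a) (hb : b * b = b) (hab : a * b = 0)
    (hca : (p + x) * a = η • x) (hcb : (p + x) * b = η • x) : x = 0 := by
  have h := hc.mul_eq_zero_of_mul_eq_mul hchar ha hb hab (hca.trans hcb.symm)
  rw [hca, smul_eq_zero] at h
  exact h.resolve_left hη₀

lemma mul_self_eq_smul_of_mul_mul_eq_mul (hchar : (2 : F) ≠ 0) (hη₀ : η ≠ 0)
    (hp : σ p = p) (hx : σ x = -x) (ha : σ a = a) (hca : (p + x) * a = η • a + η • x)
    (h : (p + x) * ((p + x) * a) = (p + x) * a) : x * x = (1 - η) • a := by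
  rw [hca, mul_add, mul_smul_comm, mul_smul_comm, hca, add_mul] at h
  have hsplit : η • (x * x - (1 - η) • a) + η • (p * x - (1 - η) • x) = 0 := by
    linear_combination (norm := module) h
  obtain ⟨heven, -⟩ := eq_zero_and_eq_zero_of_add_eq_zero hchar σ
    (by simp [hx, ha]) (by simp [hp, hx]; module) hsplit
  exact sub_eq_zero.mp ((smul_eq_zero.mp heven).resolve_left hη₀)

theorem map_eq_self_of_orthogonal_axes [IsScalarTower F A A] (hchar : (2 : F) ≠ 0)
    (hη₀ : η ≠ 0) (hη₁ : η ≠ 1)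
    (ha : IsAxis F η a) (hb : IsAxis F η b) (hd : IsAxis F η d)
    (hσa : IsMiyamoto F η a σ) (hσb : IsMiyamoto F η b σ) (hσd : IsMiyamoto F η d σ)
    (hab : a * b = 0) (had : a * d = 0) (hbd : b * d = 0) (hc : IsAxis F η c) : σ c = c := by
  obtain ⟨p, hp, x, hx, rfl⟩ := ha.exists_eq_add c
  have hσp : σ p = p := hσa.fixes p hp
  have hσx : σ x = -x := hσa.negates x hx
  suffices x = 0 by rw [this, add_zero, hσp]
  by_contra hx₀
  obtain ⟨κa, hap, hca, hxa, hIa⟩ := hc.exists_coeff hchar hσp hσx hx₀ ha hσa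
  obtain ⟨κb, hbp, hcb, hxb, hIb⟩ := hc.exists_coeff hchar hσp hσx hx₀ hb hσb
  obtain ⟨κd, hdp, hcd, hxd, hId⟩ := hc.exists_coeff hchar hσp hσx hx₀ hd hσd
  have hba : b * a = 0 := by rw [mul_comm, hab]
  have hda : d * a = 0 := by rw [mul_comm, had]
  have hdb : d * b = 0 := by rw [mul_comm, hbd]
  rcases coeff_cases hchar (self_coeff_cases hchar ha hap hxa hIa)
      (cross_coeff_cases hchar hη₀ hb hba hbp hxb hIa)
      (cross_coeff_cases hchar hη₀ ha hab hap hxa hIb)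
      (cross_coeff_cases hchar hη₀ hd hda hdp hxd hIa)
      (cross_coeff_cases hchar hη₀ ha had hap hxa hId)
      (cross_coeff_cases hchar hη₀ hd hdb hdp hxd hIb)
      (cross_coeff_cases hchar hη₀ hb hbd hbp hxb hId)
    with ⟨rfl, rfl⟩ | ⟨rfl, rfl⟩ | ⟨rfl, rfl⟩ | ⟨hA, hB, hD⟩
  · rw [zero_smul, zero_add] at hca hcb
    exact hx₀ (eq_zero_of_mul_eq_smul_of_orthogonal hchar hη₀ hc ha.idem hb.idem hab hca hcb)
  · rw [zero_smul, zero_add] at hca hcd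
    exact hx₀ (eq_zero_of_mul_eq_smul_of_orthogonal hchar hη₀ hc ha.idem hd.idem had hca hcd)
  · rw [zero_smul, zero_add] at hcb hcd
    exact hx₀ (eq_zero_of_mul_eq_smul_of_orthogonal hchar hη₀ hc hb.idem hd.idem hbd hcb hcd)
  · -- `a - b` and `a - d` are now `η`-eigenvectors of `c`, so `a = (a - b)(a - d)` lies in
    -- `A_1(c) ⊕ A_0(c)`. This gives `x * x = (1 - η) • a`, whose product with `b` is then
    -- both `0` and `(η - η²) • b`.
    rw [hA] at hca
    rw [hB] at hcb hxb
    rw [hD] at hcd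
    have hcaa := hc.mul_mul_eq_mul_of_orthogonal ha.idem hab had hbd
      (by rw [mem_eigSp, mul_sub, hca, hcb]; module) (by rw [mem_eigSp, mul_sub, hca, hcd]; module)
    have hxx := mul_self_eq_smul_of_mul_mul_eq_mul hchar hη₀ hσp hσx (hσa.map_self ha) hca hcaa
    have hb₀ : (η - η * η) • b = 0 := by rw [← hxb, hxx, mul_smul_comm, hba, smul_zero]
    have : η * (1 - η) = 0 := by
      linear_combination (smul_eq_zero.mp hb₀).resolve_right hb.ne_zero
    exact mul_ne_zero hη₀ (sub_ne_zero.mpr hη₁.symm) this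

lemma eigSp_one_eq_top_of_connected [IsScalarTower F A A] {𝒜 : Set A}
    (hgen : NonUnitalAlgebra.adjoin F 𝒜 = ⊤) (hconn : (axesGraph 𝒜).Connected)
    (ha : IsAxis F η a) (h𝒜 : ∀ c ∈ 𝒜, c = a ∨ a * c = 0) : eigSp F a 1 = ⊤ := by
  have hle : ∀ P : Submodule F A, (∀ x ∈ P, ∀ y ∈ P, x * y ∈ P) → 𝒜 ⊆ P → P = ⊤ :=
    fun P hmul h𝒜P => eq_top_iff.mpr fun u _ =>
      NonUnitalAlgebra.adjoin_le
        (S := P.toNonUnitalSubalgebra fun x y hx hy => hmul x hx y hy) h𝒜P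
        (hgen ▸ NonUnitalAlgebra.mem_top)
  by_cases ha𝒜 : a ∈ 𝒜
  · refine hle _ ha.f11 fun c hc => ?_
    have hreach : ∀ {u v : 𝒜}, (axesGraph 𝒜).Walk u v → (u : A) = a → (v : A) = a := by
      intro u v w
      induction w with
      | nil => exact id
      | cons hadj _ ih =>
        intro hu
        exact ih ((h𝒜 _ (Subtype.mem _)).resolve_right (hu ▸ hadj.2))
    obtain ⟨w⟩ := hconn.preconnected ⟨a, ha𝒜⟩ ⟨c, hc⟩
    exact (hreach w rfl).symm ▸ ha.self_mem_eigSp_one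
  · refine absurd (hle _ ha.f00 fun c hc => ?_) fun h => ha.ne_zero ?_
    · rw [SetLike.mem_coe, mem_eigSp, zero_smul]
      exact (h𝒜 c hc).resolve_left (ne_of_mem_of_not_mem hc ha𝒜)
    · have h0 : a ∈ eigSp F a 0 := h ▸ Submodule.mem_top
      rwa [mem_eigSp, zero_smul, ha.idem] at h0

end

/-- With `Δ_𝒜` connected and distinct `η`-axes `a, b` satisfying
`τ_a = τ_b`, any `η`-axis `d` with `τ_d = τ_a` satisfies `d ∈ {a, b}`. -/
theorem at_most_two_axes_with_same_miyamoto
    {F : Type u} {A : Type v} [Field F] [NonUnitalNonAssocCommRing A]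
    [Module F A] [SMulCommClass F A A] [IsScalarTower F A A]
    (hchar : (2 : F) ≠ 0) (η : F) (hη0 : η ≠ 0) (hη1 : η ≠ 1)
    (𝒜 : Set A) (h𝒜 : ∀ a ∈ 𝒜, IsAxis F η a)
    (hgen : NonUnitalAlgebra.adjoin F 𝒜 = ⊤)
    (hconn : (axesGraph 𝒜).Connected)
    (a b : A) (ha : IsAxis F η a) (hb : IsAxis F η b) (hab : a ≠ b)
    (τa τb : A → A) (hτa : IsMiyamoto F η a τa) (hτb : IsMiyamoto F η b τb)
    (hττ : τa = τb)
    (d : A) (hd : IsAxis F η d) (τd : A → A) (hτd : IsMiyamoto F η d τd)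
    (hτda : τd = τa) :
    d = a ∨ d = b := by
  subst hττ hτda
  set σ := hτa.toNonUnitalAlgHom
  have hσa : IsMiyamoto F η a σ := hτa
  have hσb : IsMiyamoto F η b σ := hτb
  have hσd : IsMiyamoto F η d σ := hτd
  by_contra! hne
  have hσ : ∀ {u v}, IsAxis F η u → IsMiyamoto F η u σ → IsAxis F η v → σ v = v →
      v = u ∨ u * v = 0 := fun hu hσu hv => hu.eq_or_mul_eq_zero_of_map_eq_self hchar hσu hv
  have hab₀ := (hσ ha hσa hb (hσb.map_self hb)).resolve_left hab.symm
  have had₀ := (hσ ha hσa hd (hσd.map_self hd)).resolve_left hne.1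
  have hbd₀ := (hσ hb hσb hd (hσd.map_self hd)).resolve_left hne.2
  have htop := eigSp_one_eq_top_of_connected hgen hconn ha fun c hc => hσ ha hσa (h𝒜 c hc)
    (map_eq_self_of_orthogonal_axes hchar hη0 hη1 ha hb hd hσa hσb hσd hab₀ had₀ hbd₀ (h𝒜 c hc))
  exact hab (ha.eq_of_mem_eigSp_one hb.ne_zero hb.idem (htop ▸ Submodule.mem_top)).symm
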